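/- Let α > 0 and β = 1 − 1/(2α). If θ is a badly approximable real number, then the Archimedean spiral lattice Γ_{α,θ} is asymptotically β-uniformly discrete. -/

import Mathlib

/-- The Archimedean spiral lattice `Γ_{α,θ} = { n^α e^{2πnθi} : n ∈ ℤ, n ≥ 0 }`. -/
noncomputable def spiralLattice (α θ : ℝ) : Set ℂ :=
  {z : ℂ | ∃ n : ℕ, z = (((n : ℝ) ^ α : ℝ) : ℂ) *
    Complex.exp ((2 * Real.pi * n * θ : ℝ) * Complex.I)}

/-- `Γ` is asymptotically `β`-relatively dense. -/
def AsympRelativelyDense (β : ℝ) (Γ : Set ℂ) : Prop :=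
  ∃ r > 0, ∀ r₁ > r, ∃ M > 0, ∀ z : ℂ, M ≤ ‖z‖ →
    ∃ ζ ∈ Γ, 1 ≤ ‖ζ‖ ∧ ‖z - ζ‖ < r₁ * ‖z‖ ^ β

/-- `Γ` is asymptotically `β`-uniformly discrete. -/
def AsympUniformlyDiscrete (β : ℝ) (Γ : Set ℂ) : Prop :=
  ∃ s > 0, ∀ s₁, 0 < s₁ → s₁ < s → ∃ M > 0, ∀ z : ℂ, M ≤ ‖z‖ →
    {ζ ∈ Γ | 1 ≤ ‖ζ‖ ∧ ‖z - ζ‖ < s₁ * ‖z‖ ^ β}.Subsingleton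

/-- `θ` is badly approximable. -/
def BadlyApproximable (θ : ℝ) : Prop :=
  Irrational θ ∧ ∃ c > 0, ∀ p q : ℤ, 1 ≤ q → c ≤ (q : ℝ) * |(q : ℝ) * θ - (p : ℝ)|

/-!
Write `ζₙ = n^α e^{2πinθ}`. For `1 ≤ m < n` the radial gap `n^α - m^α` is at least
`α m^α (n - m) / n`, while the angular gap is at least `m^α |sin (π (n - m) θ)| ≥ 2c m^α / (n - m)`
because `θ` is badly approximable. Each bound is a lower bound for `‖ζₙ - ζₘ‖`, and in their
product the difference `n - m` cancels: `‖ζₙ - ζₘ‖² ≥ 2αc m^{2α} / n`. Two lattice points close to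
`z` with `‖z‖ = R` have `m^α ≥ R/2` and `n ≤ (2R)^{1/α}`, hence are at distance
`≳ R^{1 - 1/(2α)} = R^β`, so a disc of radius `s₁ R^β` with `s₁` small holds at most one of them.
-/

open Real Complex Filter Topology

theorem two_mul_abs_sub_round_le_abs_sin_pi_mul (x : ℝ) :
    2 * |x - round x| ≤ |Real.sin (π * x)| := by
  have hd : |π * (x - round x)| ≤ π / 2 := by
    rw [abs_mul, abs_of_pos pi_pos]
    nlinarith [abs_sub_round x, pi_pos]
  have hshift : Real.sin (π * x) = (-1) ^ round x * Real.sin (π * (x - round x)) := by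
    rw [← Real.sin_add_int_mul_pi]; ring_nf
  calc 2 * |x - round x| = 2 / π * |π * (x - round x)| := by
        rw [abs_mul, abs_of_pos pi_pos]; field_simp
    _ ≤ |Real.sin (π * (x - round x))| := mul_abs_le_abs_sin hd
    _ = |Real.sin (π * x)| := by rw [hshift, abs_mul, abs_neg_one_zpow, one_mul]

theorem div_le_abs_sin_pi_mul_of_forall_le_mul_abs_sub {θ c : ℝ}
    (hc : ∀ p q : ℤ, 1 ≤ q → c ≤ (q : ℝ) * |(q : ℝ) * θ - (p : ℝ)|) {q : ℤ} (hq : 1 ≤ q) :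
    2 * c / q ≤ |Real.sin (π * (q * θ))| := by
  have hq' : (0 : ℝ) < q := by exact_mod_cast hq
  calc 2 * c / q ≤ 2 * |q * θ - round (q * θ : ℝ)| := by
        rw [div_le_iff₀ hq']; nlinarith [hc (round (q * θ : ℝ)) q hq]
    _ ≤ _ := two_mul_abs_sub_round_le_abs_sin_pi_mul _

theorem norm_exp_mul_I_sub_exp_mul_I (a b : ℝ) :
    ‖exp (a * I) - exp (b * I)‖ = 2 * |Real.sin ((a - b) / 2)| := by
  have hfac : exp (a * I) - exp (b * I) = exp (b * I) * (exp (I * ↑(a - b)) - 1) := by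
    rw [mul_sub, mul_one, ← Complex.exp_add]; push_cast; ring_nf
  rw [hfac, norm_mul, norm_exp_ofReal_mul_I, one_mul, norm_exp_I_mul_ofReal_sub_one,
    Real.norm_eq_abs, abs_mul, abs_two]

theorem mul_norm_sub_le_two_mul_norm_smul_sub_smul {E : Type*} [SeminormedAddCommGroup E]
    [NormedSpace ℝ E] {u v : E} (hu : ‖u‖ = 1) (hv : ‖v‖ = 1) {r ρ : ℝ} (hr : 0 ≤ r)
    (hrρ : r ≤ ρ) : r * ‖v - u‖ ≤ 2 * ‖ρ • v - r • u‖ := by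
  have hradial : ρ - r ≤ ‖ρ • v - r • u‖ := by
    simpa [norm_smul, hu, hv, abs_of_nonneg hr, abs_of_nonneg (hr.trans hrρ)]
      using norm_sub_norm_le (ρ • v) (r • u)
  have hsplit : r • (v - u) = (ρ • v - r • u) - (ρ - r) • v := by
    simp only [smul_sub, sub_smul]; abel
  calc r * ‖v - u‖ = ‖(ρ • v - r • u) - (ρ - r) • v‖ := by
        rw [← hsplit, norm_smul, Real.norm_of_nonneg hr]
    _ ≤ ‖ρ • v - r • u‖ + (ρ - r) := by
        simpa [norm_smul, hv, abs_of_nonneg (sub_nonneg.2 hrρ)]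
          using norm_sub_le (ρ • v - r • u) ((ρ - r) • v)
    _ ≤ 2 * ‖ρ • v - r • u‖ := by linarith

theorem mul_rpow_mul_one_sub_div_le_rpow_sub_rpow {x y α : ℝ} (hx : 0 < x) (hy : 0 < y)
    (hα : 0 ≤ α) : α * x ^ α * (1 - x / y) ≤ y ^ α - x ^ α := by
  have hlog : 1 - x / y ≤ Real.log (y / x) := by
    simpa using Real.one_sub_inv_le_log_of_pos (div_pos hy hx)
  have hexp : 1 + α * Real.log (y / x) ≤ (y / x) ^ α := by
    rw [Real.rpow_def_of_pos (div_pos hy hx), mul_comm (Real.log _)]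
    linarith [Real.add_one_le_exp (α * Real.log (y / x))]
  have hy' : y ^ α = x ^ α * (y / x) ^ α := by
    rw [Real.div_rpow hy.le hx.le, mul_div_cancel₀ _ (Real.rpow_pos_of_pos hx α).ne']
  have hxα := Real.rpow_pos_of_pos hx α
  rw [hy']
  nlinarith [mul_le_mul_of_nonneg_left hlog hα]

def AnnuliSeparated (β K : ℝ) (Γ : Set ℂ) : Prop :=
  ∀ R > 0, ∀ ζ ∈ Γ, ∀ ζ' ∈ Γ, ζ ≠ ζ' → ‖ζ‖ ∈ Set.Icc (R / 2) (2 * R) →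
    ‖ζ'‖ ∈ Set.Icc (R / 2) (2 * R) → K * R ^ β ≤ ‖ζ - ζ'‖

theorem exists_forall_ge_mul_rpow_le_half {β : ℝ} (hβ : β < 1) (s : ℝ) :
    ∃ M > 0, ∀ R ≥ M, s * R ^ β ≤ R / 2 := by
  have hlim : Tendsto (fun R : ℝ => s * R ^ (β - 1)) atTop (𝓝 0) := by
    simpa [neg_sub] using (tendsto_rpow_neg_atTop (sub_pos.2 hβ)).const_mul s
  obtain ⟨N, hN⟩ := eventually_atTop.1 (hlim.eventually (ge_mem_nhds one_half_pos))
  refine ⟨max N 1, by positivity, fun R hRM => ?_⟩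
  have hR : 0 < R := one_pos.trans_le (le_of_max_le_right hRM)
  have := hN R (le_of_max_le_left hRM)
  rw [Real.rpow_sub_one hR.ne', mul_div_assoc', div_le_iff₀ hR] at this
  linarith

theorem AnnuliSeparated.asympUniformlyDiscrete {β K : ℝ} {Γ : Set ℂ}
    (hΓ : AnnuliSeparated β K Γ) (hβ : β < 1) (hK : 0 < K) : AsympUniformlyDiscrete β Γ := by
  refine ⟨K / 2, half_pos hK, fun s₁ _ hs₁K => ?_⟩
  obtain ⟨M, hM, hMR⟩ := exists_forall_ge_mul_rpow_le_half hβ s₁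
  refine ⟨M, hM, fun z hz => ?_⟩
  have hR : 0 < ‖z‖ := hM.trans_le hz
  have hsmall := hMR ‖z‖ hz
  have hannulus : ∀ w : ℂ, ‖z - w‖ < s₁ * ‖z‖ ^ β → ‖w‖ ∈ Set.Icc (‖z‖ / 2) (2 * ‖z‖) :=
    fun w hw => ⟨by linarith [norm_sub_norm_le z w],
      by linarith [norm_le_norm_add_norm_sub' w z, norm_sub_rev z w]⟩
  rintro ζ ⟨hζ, -, hzζ⟩ ζ' ⟨hζ', -, hzζ'⟩
  by_contra hne
  have hsep := hΓ ‖z‖ hR ζ hζ ζ' hζ' hne (hannulus ζ hzζ) (hannulus ζ' hzζ')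
  have htri : ‖ζ - ζ'‖ < 2 * s₁ * ‖z‖ ^ β := by
    linarith [norm_sub_le_norm_sub_add_norm_sub ζ z ζ', norm_sub_rev ζ z]
  have : 2 * s₁ * ‖z‖ ^ β < K * ‖z‖ ^ β :=
    mul_lt_mul_of_pos_right (by linarith) (Real.rpow_pos_of_pos hR β)
  linarith

noncomputable def spiralPoint (α θ : ℝ) (n : ℕ) : ℂ :=
  (((n : ℝ) ^ α : ℝ) : ℂ) * exp ((2 * π * n * θ : ℝ) * I)

theorem spiralLattice_eq_range (α θ : ℝ) : spiralLattice α θ = Set.range (spiralPoint α θ) := by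
  ext z
  simp [spiralLattice, spiralPoint, eq_comm]

theorem norm_spiralPoint (α θ : ℝ) (n : ℕ) : ‖spiralPoint α θ n‖ = (n : ℝ) ^ α := by
  rw [spiralPoint, norm_mul, norm_real, norm_exp_ofReal_mul_I, mul_one,
    Real.norm_of_nonneg (Real.rpow_nonneg n.cast_nonneg α)]

theorem div_le_sq_norm_spiralPoint_sub {α θ c : ℝ} (hα : 0 < α)
    (hc : ∀ p q : ℤ, 1 ≤ q → c ≤ (q : ℝ) * |(q : ℝ) * θ - (p : ℝ)|) {m n : ℕ} (hm : 1 ≤ m)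
    (hmn : m < n) :
    2 * α * c * ((m : ℝ) ^ α) ^ 2 / n ≤ ‖spiralPoint α θ n - spiralPoint α θ m‖ ^ 2 := by
  set D := ‖spiralPoint α θ n - spiralPoint α θ m‖
  have hm0 : (0 : ℝ) < m := by exact_mod_cast hm
  have hmn' : (m : ℝ) < n := by exact_mod_cast hmn
  have hn0 : (0 : ℝ) < n := hm0.trans hmn'
  have hmα : 0 < (m : ℝ) ^ α := Real.rpow_pos_of_pos hm0 α
  have hradial : α * (m : ℝ) ^ α * ((n - m) / n) ≤ D :=
    calc α * (m : ℝ) ^ α * ((n - m) / n) = α * (m : ℝ) ^ α * (1 - m / n) := by field_simp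
      _ ≤ (n : ℝ) ^ α - (m : ℝ) ^ α := mul_rpow_mul_one_sub_div_le_rpow_sub_rpow hm0 hn0 hα.le
      _ ≤ D := by
        simpa [norm_spiralPoint] using norm_sub_norm_le (spiralPoint α θ n) (spiralPoint α θ m)
  have hangular : 2 * c * (m : ℝ) ^ α / (n - m) ≤ D := by
    have hsin := div_le_abs_sin_pi_mul_of_forall_le_mul_abs_sub hc (q := n - m) (by omega)
    have hsmul := mul_norm_sub_le_two_mul_norm_smul_sub_smul (norm_exp_ofReal_mul_I _)
      (norm_exp_ofReal_mul_I _) hmα.le (Real.rpow_le_rpow hm0.le hmn'.le hα.le)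
      (u := exp ((2 * π * m * θ : ℝ) * I)) (v := exp ((2 * π * n * θ : ℝ) * I))
    rw [norm_exp_mul_I_sub_exp_mul_I, show (2 * π * n * θ - 2 * π * m * θ) / 2
      = π * ((n - m : ℤ) * θ) by push_cast; ring] at hsmul
    simp only [Complex.real_smul] at hsmul
    change _ ≤ 2 * D at hsmul
    push_cast at hsin hsmul
    calc 2 * c * (m : ℝ) ^ α / (n - m) = (m : ℝ) ^ α * (2 * c / (n - m)) := by ring
      _ ≤ _ := mul_le_mul_of_nonneg_left hsin hmα.le
      _ ≤ D := by linarith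
  calc 2 * α * c * ((m : ℝ) ^ α) ^ 2 / n
      = 2 * c * (m : ℝ) ^ α / (n - m) * (α * (m : ℝ) ^ α * ((n - m) / n)) := by
        field_simp [(sub_pos.2 hmn').ne']
    _ ≤ D * D := mul_le_mul hangular hradial
        (by have := sub_pos.2 hmn'; positivity) (norm_nonneg _)
    _ = D ^ 2 := (sq D).symm

theorem mul_rpow_le_norm_spiralPoint_sub {α θ c R : ℝ} (hα : 0 < α) (hc0 : 0 < c)
    (hc : ∀ p q : ℤ, 1 ≤ q → c ≤ (q : ℝ) * |(q : ℝ) * θ - (p : ℝ)|) (hR : 0 < R) {m n : ℕ}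
    (hmn : m < n) (hm : R / 2 ≤ (m : ℝ) ^ α) (hn : (n : ℝ) ^ α ≤ 2 * R) :
    √(α * c / 2 * 2 ^ (-α⁻¹)) * R ^ (1 - 1 / (2 * α)) ≤
      ‖spiralPoint α θ n - spiralPoint α θ m‖ := by
  have hm1 : 1 ≤ m := by
    rcases Nat.eq_zero_or_pos m with rfl | hm0
    · simp only [Nat.cast_zero, Real.zero_rpow hα.ne'] at hm; linarith
    · exact hm0
  have hn0 : (0 : ℝ) < n := by exact_mod_cast (Nat.zero_lt_one.trans_le hm1).trans hmn
  have hn_le : (n : ℝ) ≤ (2 * R) ^ α⁻¹ := by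
    rw [← Real.rpow_rpow_inv n.cast_nonneg hα.ne']
    exact Real.rpow_le_rpow (by positivity) hn (by positivity)
  have hscale : 2 ^ (-α⁻¹) * (R ^ (1 - 1 / (2 * α))) ^ 2 = R ^ 2 / (2 * R) ^ α⁻¹ := by
    rw [← Real.rpow_natCast, ← Real.rpow_mul hR.le,
      show (1 - 1 / (2 * α)) * ((2 : ℕ) : ℝ) = 2 - α⁻¹ by push_cast; field_simp,
      Real.rpow_sub hR, Real.rpow_two, Real.mul_rpow zero_le_two hR.le, Real.rpow_neg zero_le_two]
    field_simp
  rw [← pow_le_pow_iff_left₀ (by positivity) (norm_nonneg _) two_ne_zero]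
  calc (√(α * c / 2 * 2 ^ (-α⁻¹)) * R ^ (1 - 1 / (2 * α))) ^ 2
      = α * c / 2 * (R ^ 2 / (2 * R) ^ α⁻¹) := by
        rw [mul_pow, Real.sq_sqrt (by positivity), mul_assoc, hscale]
    _ ≤ α * c / 2 * (R ^ 2 / n) := by gcongr
    _ = 2 * α * c * (R / 2) ^ 2 / n := by ring
    _ ≤ 2 * α * c * ((m : ℝ) ^ α) ^ 2 / n := by gcongr
    _ ≤ _ := div_le_sq_norm_spiralPoint_sub hα hc hm1 hmn

theorem spiralLattice_annuliSeparated {α θ c : ℝ} (hα : 0 < α) (hc0 : 0 < c)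
    (hc : ∀ p q : ℤ, 1 ≤ q → c ≤ (q : ℝ) * |(q : ℝ) * θ - (p : ℝ)|) :
    AnnuliSeparated (1 - 1 / (2 * α)) √(α * c / 2 * 2 ^ (-α⁻¹)) (spiralLattice α θ) := by
  rw [spiralLattice_eq_range]
  rintro R hR _ ⟨m, rfl⟩ _ ⟨n, rfl⟩ hne ⟨hm, hm'⟩ ⟨hn, hn'⟩
  rw [norm_spiralPoint] at hm hm' hn hn'
  rcases lt_or_gt_of_ne (fun h : m = n => hne (h ▸ rfl)) with hmn | hnm
  · rw [norm_sub_rev]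
    exact mul_rpow_le_norm_spiralPoint_sub hα hc0 hc hR hmn hm hn'
  · exact mul_rpow_le_norm_spiralPoint_sub hα hc0 hc hR hnm hn hm'

theorem badly_approx_implies_spiral_uniformly_discrete (α θ β : ℝ) (hα : 0 < α)
    (hβ : β = 1 - 1 / (2 * α)) (h : BadlyApproximable θ) :
    AsympUniformlyDiscrete β (spiralLattice α θ) := by
  obtain ⟨-, c, hc0, hc⟩ := h
  subst hβ
  exact (spiralLattice_annuliSeparated hα hc0 hc).asympUniformlyDiscrete
    (sub_lt_self _ (by positivity)) (by positivity)
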